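/- For all complex s with Re(s) > 1, ∑_{n≥1} t_n/n^s = (1/2)ζ(s) − ((1+2^s)/(2(1−2^s)))·∑_{n≥1} ε_{n-1}/n^s, where ζ is the Riemann zeta function. -/

import Mathlib

open Complex

/-- The Thue-Morse sequence: binary digit sum of `n` modulo 2. -/
def tm (n : ℕ) : ℕ := (Nat.digits 2 n).sum % 2

/-- The ±1 Thue-Morse sequence `ε n = (-1)^(t n)`. -/
noncomputable def eps (n : ℕ) : ℂ := (-1) ^ tm n

lemma tm_two_mul (n : ℕ) : tm (2 * n) = tm n := by
  rcases Nat.eq_zero_or_pos n with h | h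
  · simp [h]
  · rw [tm, Nat.digits_def' (by norm_num : 1 < 2) (by omega)]
    have h1 : (2 * n) % 2 = 0 := by omega
    have h2 : (2 * n) / 2 = n := by omega
    rw [h1, h2, List.sum_cons, tm, Nat.zero_add]

lemma tm_two_mul_add_one (n : ℕ) : tm (2 * n + 1) = (tm n + 1) % 2 := by
  rw [tm, Nat.digits_def' (by norm_num : 1 < 2) (by omega)]
  have h1 : (2 * n + 1) % 2 = 1 := by omega
  have h2 : (2 * n + 1) / 2 = n := by omega
  rw [h1, h2, List.sum_cons, tm]
  omega

lemma neg_one_pow_mod_two (m : ℕ) : ((-1 : ℂ)) ^ (m % 2) = (-1) ^ m := by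
  conv_rhs => rw [← Nat.div_add_mod m 2]
  rw [pow_add, pow_mul]
  norm_num

lemma eps_two_mul (n : ℕ) : eps (2 * n) = eps n := by
  rw [eps, tm_two_mul, eps]

lemma eps_two_mul_add_one (n : ℕ) : eps (2 * n + 1) = - eps n := by
  rw [eps, tm_two_mul_add_one, neg_one_pow_mod_two, pow_add, eps]
  ring

lemma norm_eps (n : ℕ) : ‖eps n‖ = 1 := by
  rw [eps, norm_pow]
  simp

lemma tm_cast (n : ℕ) : (tm n : ℂ) = (1 - eps n) / 2 := by
  have h : tm n < 2 := Nat.mod_lt _ (by norm_num)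
  have h' : tm n = 0 ∨ tm n = 1 := by omega
  rcases h' with h' | h' <;> rw [eps, h'] <;> norm_num

lemma summable_aux (s : ℂ) (hs : 1 < s.re) (c : ℕ → ℂ) (hc : ∀ n, ‖c n‖ ≤ 1) :
    Summable (fun n : ℕ => c n / ((n : ℂ) + 1) ^ s) := by
  have hsum : Summable (fun n : ℕ => 1 / ((n : ℝ) + 1) ^ s.re) := by
    have h1 := (Real.summable_one_div_nat_rpow (p := s.re)).mpr hs
    have h2 := (summable_nat_add_iff 1).mpr h1
    refine h2.congr fun n => ?_
    push_cast
    ring_nf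
  refine Summable.of_norm_bounded hsum fun n => ?_
  have hpos : (0 : ℝ) < (n : ℝ) + 1 := by positivity
  have hcast : ((n : ℂ) + 1) = (((n : ℝ) + 1 : ℝ) : ℂ) := by push_cast; ring
  rw [norm_div, hcast]
  rw [Complex.norm_cpow_eq_rpow_re_of_pos hpos]
  gcongr
  exact hc n

theorem stmt_4 (s : ℂ) (hs : 1 < s.re) :
    ∑' n : ℕ, (tm (n + 1) : ℂ) / ((n : ℂ) + 1) ^ s =
      (1 / 2) * riemannZeta s -
        ((1 + 2 ^ s) / (2 * (1 - 2 ^ s))) * ∑' n : ℕ, eps n / ((n : ℂ) + 1) ^ s := by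
  set x : ℂ := (2 : ℂ) ^ s with hxdef
  have hxabs : ‖x‖ = (2 : ℝ) ^ s.re := by
    rw [hxdef, show ((2 : ℂ)) = (((2 : ℝ)) : ℂ) by norm_num,
      Complex.norm_cpow_eq_rpow_re_of_pos (by norm_num)]
  have hxgt : (1 : ℝ) < ‖x‖ := by
    rw [hxabs]
    exact (Real.one_lt_rpow_iff_of_pos (by norm_num)).mpr (Or.inl ⟨by norm_num, by linarith⟩)
  have hx0 : x ≠ 0 := by
    intro h; rw [h] at hxgt; simp at hxgt; linarith
  have hx1 : (1 : ℂ) - x ≠ 0 := by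
    intro h
    have hx : x = 1 := by linear_combination -h
    rw [hx] at hxgt; simp at hxgt
  have hne : ∀ k : ℕ, ((k : ℂ) + 1) ^ s ≠ 0 := by
    intro k
    have hb : ((k : ℂ) + 1) ≠ 0 := Nat.cast_add_one_ne_zero k
    simp [Complex.cpow_eq_zero_iff, hb]
  have hcpow2 : ∀ k : ℕ, (2 * ((k : ℂ) + 1)) ^ s = x * ((k : ℂ) + 1) ^ s := by
    intro k
    have h := Complex.mul_cpow_ofReal_nonneg (a := 2) (b := (k : ℝ) + 1)
      (by norm_num) (by positivity) s
    push_cast at h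
    exact h
  -- summabilities
  have hZ : Summable (fun n : ℕ => 1 / ((n : ℂ) + 1) ^ s) :=
    summable_aux s hs (fun _ => 1) (by simp)
  have hD : Summable (fun n : ℕ => eps n / ((n : ℂ) + 1) ^ s) :=
    summable_aux s hs _ (fun n => (norm_eps n).le)
  have hA : Summable (fun n : ℕ => eps (n + 1) / ((n : ℂ) + 1) ^ s) :=
    summable_aux s hs _ (fun n => (norm_eps _).le)
  set f : ℕ → ℂ := fun n => eps (n + 1) / ((n : ℂ) + 1) ^ s with hfdef
  set g : ℕ → ℂ := fun n => eps n / ((n : ℂ) + 1) ^ s with hgdef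
  set o : ℕ → ℂ := fun k => eps k / (2 * (k : ℂ) + 1) ^ s with hodef
  set A := ∑' n, f n with hAdef
  set D := ∑' n, g n with hDdef
  set O := ∑' k, o k with hOdef
  have hinj2 : Function.Injective (fun k : ℕ => 2 * k) := fun a b h => by
    simpa using h
  have hinj2' : Function.Injective (fun k : ℕ => 2 * k + 1) := fun a b h => by
    simp only at h; omega
  -- pointwise identities for f
  have hfe : ∀ k : ℕ, f (2 * k) = - o k := by
    intro k
    simp only [hfdef, hodef]
    rw [eps_two_mul_add_one]
    push_cast
    rw [neg_div]
  have hfo : ∀ k : ℕ, f (2 * k + 1) = x⁻¹ * f k := by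
    intro k
    simp only [hfdef]
    have h1 : 2 * k + 1 + 1 = 2 * (k + 1) := by ring
    have h2 : (((2 * k + 1 : ℕ) : ℂ) + 1) = 2 * ((k : ℂ) + 1) := by push_cast; ring
    rw [h1, eps_two_mul, h2, hcpow2, div_mul_eq_div_div_swap, div_eq_inv_mul]
  -- pointwise identities for g
  have hge : ∀ k : ℕ, g (2 * k) = o k := by
    intro k
    simp only [hgdef, hodef]
    rw [eps_two_mul]
    push_cast
    ring_nf
  have hgo : ∀ k : ℕ, g (2 * k + 1) = -(x⁻¹ * g k) := by
    intro k
    simp only [hgdef]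
    have h2 : (((2 * k + 1 : ℕ) : ℂ) + 1) = 2 * ((k : ℂ) + 1) := by push_cast; ring
    rw [eps_two_mul_add_one, h2, hcpow2, neg_div, div_mul_eq_div_div_swap, div_eq_inv_mul]
  -- even/odd splitting
  have hfe' : Summable (fun k => f (2 * k)) := hA.comp_injective hinj2
  have hfo' : Summable (fun k => f (2 * k + 1)) := hA.comp_injective hinj2'
  have hge' : Summable (fun k => g (2 * k)) := hD.comp_injective hinj2
  have hgo' : Summable (fun k => g (2 * k + 1)) := hD.comp_injective hinj2'
  have E1 : -O + x⁻¹ * A = A := by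
    have h := tsum_even_add_odd hfe' hfo'
    rw [tsum_congr hfe, tsum_congr hfo, tsum_neg, tsum_mul_left] at h
    exact h
  have E2 : O + -(x⁻¹ * D) = D := by
    have h := tsum_even_add_odd hge' hgo'
    rw [tsum_congr hge, tsum_congr hgo, tsum_neg, tsum_mul_left] at h
    exact h
  have key : (1 - x) * A = (1 + x) * D := by
    have hxx : x⁻¹ * x = 1 := inv_mul_cancel₀ hx0
    linear_combination x * E1 + x * E2 - (A - D) * hxx
  -- rewrite the left-hand side
  have hpt : ∀ n : ℕ, (tm (n + 1) : ℂ) / ((n : ℂ) + 1) ^ s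
      = (1 / 2) * (1 / ((n : ℂ) + 1) ^ s) - (1 / 2) * f n := by
    intro n
    rw [tm_cast]
    simp only [hfdef]
    ring
  rw [tsum_congr hpt, Summable.tsum_sub (hZ.mul_left _) (hA.mul_left _), tsum_mul_left, tsum_mul_left]
  have hzeta : riemannZeta s = ∑' n : ℕ, 1 / ((n : ℂ) + 1) ^ s := by
    rw [zeta_eq_tsum_one_div_nat_add_one_cpow hs]
  rw [hzeta]
  have h2 : (2 : ℂ) * (1 - x) ≠ 0 := mul_ne_zero two_ne_zero hx1
  have hhalf : (1 / 2 : ℂ) * A = (1 + x) / (2 * (1 - x)) * D := by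
    rw [div_mul_eq_mul_div, div_mul_eq_mul_div, div_eq_div_iff two_ne_zero h2]
    linear_combination 2 * key
  rw [← hAdef]
  linear_combination -hhalf
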